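/- arXiv:1610.05603 — 5 statements merged into one kernel-verified Lean document; each statement's English description precedes it below -/
import Mathlib

section
/- Attacks on a composed table decompose: for tables t1 (with c1 columns) and t2 (with c2 columns), ℓ ≤ min(c1,c2), and m ≥ 0, a table t satisfies t ⟶_m (t1 ⋈_ℓ t2) if and only if there exist m1, m2 with m1 + m2 = m and tables t1', t2' with t1' ⟶_{m1} t1 and t2' ⟶_{m2} t2 such that t = t1' ⋈_ℓ t2'. -/
/-- XOR-sum of a Boolean row (entries in `ZMod 2`). -/
def xorSum {N : ℕ} (r : Fin N → ZMod 2) : ZMod 2 := ∑ i, r i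

/-- Reduction: keep only the rows with bit `b` at column `j`. -/
def reduce {N : ℕ} (j : Fin N) (b : ZMod 2) (t : Multiset (Fin N → ZMod 2)) :
    Multiset (Fin N → ZMod 2) :=
  t.filter (fun r => r j = b)

/-- `(1,m,N)`-safety: after any `m` reductions, equally many rows XOR-sum to 0 and to 1. -/
def safeB {N : ℕ} : ℕ → Multiset (Fin N → ZMod 2) → Prop
  | 0, t => (t.filter (fun r => xorSum r = 0)).card = (t.filter (fun r => xorSum r = 1)).card
  | m + 1, t => ∀ (j : Fin N) (c : ZMod 2), safeB m (reduce j c t)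

/-- Index of the `j`-th entry of the `i`-th block of size `ℓ`. -/
def blockIdx {N x ℓ : ℕ} (hN : x * ℓ ≤ N) (i : Fin x) (j : Fin ℓ) : Fin N :=
  ⟨i.1 * ℓ + j.1, by
    have h1 : i.1 * ℓ + j.1 < (i.1 + 1) * ℓ := by
      calc i.1 * ℓ + j.1 < i.1 * ℓ + ℓ := Nat.add_lt_add_left j.2 _
        _ = (i.1 + 1) * ℓ := (Nat.succ_mul i.1 ℓ).symm
    exact lt_of_lt_of_le h1 (le_trans (Nat.mul_le_mul i.2 (Nat.le_refl ℓ)) hN)⟩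

/-- XOR-sum of the `i`-th block of `ℓ` entries of a row. -/
def blockSum {N x ℓ : ℕ} (hN : x * ℓ ≤ N) (i : Fin x) (r : Fin N → ZMod 2) : ZMod 2 :=
  ∑ j : Fin ℓ, r (blockIdx hN i j)

/-- The `b`-restriction of `t` w.r.t. block size `ℓ`. -/
def restrict {N x ℓ : ℕ} (hN : x * ℓ ≤ N) (b : Fin x → ZMod 2)
    (t : Multiset (Fin N → ZMod 2)) : Multiset (Fin N → ZMod 2) :=
  t.filter (fun r => ∀ i, blockSum hN i r = b i)

/-- `(x,m,ℓ)`-safety. -/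
def safe {N x ℓ : ℕ} (hN : x * ℓ ≤ N) : ℕ → Multiset (Fin N → ZMod 2) → Prop
  | 0, t => ∀ b b' : Fin x → ZMod 2, (restrict hN b t).card = (restrict hN b' t).card
  | m + 1, t => ∀ (j : Fin N) (c : ZMod 2), safe hN m (reduce j c t)

/-- `Reduces m s t`: `t` is obtained from `s` by `m` reductions. -/
inductive Reduces {N : ℕ} : ℕ → Multiset (Fin N → ZMod 2) → Multiset (Fin N → ZMod 2) → Prop
  | refl (t) : Reduces 0 t t
  | step {m t t'} (j : Fin N) (b : ZMod 2) : Reduces m t t' → Reduces (m + 1) t (reduce j b t')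

/-- Join of two tables matching the last `L` columns of the first table
with the first `L` columns of the second. -/
def join {c1 c2 L : ℕ} (h1 : L ≤ c1) (h2 : L ≤ c2)
    (t1 : Multiset (Fin c1 → ZMod 2)) (t2 : Multiset (Fin c2 → ZMod 2)) :
    Multiset (Fin (c1 + c2 - L) → ZMod 2) :=
  ∑ v : Fin (c1 + c2 - L) → ZMod 2,
    Multiset.replicate
      ((t1.count (fun i : Fin c1 => v ⟨i.1, by have := i.2; omega⟩)) *
       (t2.count (fun i : Fin c2 => v ⟨c1 - L + i.1, by have := i.2; omega⟩))) v

/-- Full join of two tables on all columns. -/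
def fullJoin {N : ℕ} (t1 t2 : Multiset (Fin N → ZMod 2)) : Multiset (Fin N → ZMod 2) :=
  ∑ v : Fin N → ZMod 2, Multiset.replicate (t1.count v * t2.count v) v

/-- Projection to the last `m` columns. -/
def lastProj {N m : ℕ} (h : m ≤ N) (r : Fin N → ZMod 2) : Fin m → ZMod 2 :=
  fun j => r ⟨N - m + j.1, by have := j.2; omega⟩

/-- XOR-sum of the last `m` columns. -/
def lastSum {N m : ℕ} (h : m ≤ N) (r : Fin N → ZMod 2) : ZMod 2 :=
  xorSum (lastProj h r)

/-- Delete column `j` of an (n+1)-column row. -/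
def deleteCol {n : ℕ} (j : Fin (n + 1)) (r : Fin (n + 1) → ZMod 2) : Fin n → ZMod 2 :=
  fun i => r (j.succAbove i)

/-! Reducing `t1 ⋈_L t2` at a column that comes from `t1` (resp. `t2`) is the same as reducing
`t1` (resp. `t2`) at that column and then joining, and every column of the join comes from one of
the two tables. So an `m`-step reduction of the join, read step by step, splits into reductions of
the two factors; conversely, reductions of the factors can be replayed on the join one after the
other. -/

section Reduces

variable {N M : ℕ}

theorem Reduces.trans {m n : ℕ} {s t u : Multiset (Fin N → ZMod 2)}
    (hst : Reduces m s t) (htu : Reduces n t u) : Reduces (m + n) s u := by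
  induction htu with
  | refl => exact hst
  | step j b _ ih => exact .step j b (ih hst)

theorem Reduces.map (f : Multiset (Fin N → ZMod 2) → Multiset (Fin M → ZMod 2))
    (g : Fin N → Fin M) (hf : ∀ j b s, f (reduce j b s) = reduce (g j) b (f s))
    {m : ℕ} {s t : Multiset (Fin N → ZMod 2)} (h : Reduces m s t) : Reduces m (f s) (f t) := by
  induction h with
  | refl => exact .refl _
  | step j b _ ih => rw [hf]; exact .step _ _ ih

end Reduces

section Join

variable {c1 c2 L : ℕ} (h1 : L ≤ c1) (h2 : L ≤ c2)

def leftCol (j : Fin c1) : Fin (c1 + c2 - L) := ⟨j.1, by omega⟩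

def rightCol (j : Fin c2) : Fin (c1 + c2 - L) := ⟨c1 - L + j.1, by omega⟩

theorem leftCol_or_rightCol (k : Fin (c1 + c2 - L)) :
    (∃ j, leftCol h1 h2 j = k) ∨ ∃ j, rightCol h1 h2 j = k := by
  by_cases hk : k.1 < c1
  · exact .inl ⟨⟨k.1, hk⟩, rfl⟩
  · exact .inr ⟨⟨k.1 - (c1 - L), by omega⟩, Fin.ext (by simp only [rightCol]; omega)⟩

variable (t1 : Multiset (Fin c1 → ZMod 2)) (t2 : Multiset (Fin c2 → ZMod 2))

theorem count_join (v : Fin (c1 + c2 - L) → ZMod 2) :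
    (join h1 h2 t1 t2).count v =
      t1.count (v ∘ leftCol h1 h2) * t2.count (v ∘ rightCol h1 h2) := by
  rw [join, Multiset.count_sum']
  simp only [Multiset.count_replicate, Finset.sum_ite_eq', Finset.mem_univ, if_true]
  rfl

theorem filter_join_left (p : (Fin c1 → ZMod 2) → Prop) [DecidablePred p] :
    (join h1 h2 t1 t2).filter (fun v => p (v ∘ leftCol h1 h2)) =
      join h1 h2 (t1.filter p) t2 := by
  ext v
  simp only [Multiset.count_filter, count_join]
  split_ifs <;> simp

theorem filter_join_right (p : (Fin c2 → ZMod 2) → Prop) [DecidablePred p] :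
    (join h1 h2 t1 t2).filter (fun v => p (v ∘ rightCol h1 h2)) =
      join h1 h2 t1 (t2.filter p) := by
  ext v
  simp only [Multiset.count_filter, count_join]
  split_ifs <;> simp

theorem reduce_leftCol_join (j : Fin c1) (b : ZMod 2) :
    reduce (leftCol h1 h2 j) b (join h1 h2 t1 t2) = join h1 h2 (reduce j b t1) t2 :=
  filter_join_left h1 h2 t1 t2 (fun r => r j = b)

theorem reduce_rightCol_join (j : Fin c2) (b : ZMod 2) :
    reduce (rightCol h1 h2 j) b (join h1 h2 t1 t2) = join h1 h2 t1 (reduce j b t2) :=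
  filter_join_right h1 h2 t1 t2 (fun r => r j = b)

variable {h1 h2 t1 t2}

theorem reduces_join {m1 m2 : ℕ} {t1' : Multiset (Fin c1 → ZMod 2)}
    {t2' : Multiset (Fin c2 → ZMod 2)} (r1 : Reduces m1 t1 t1') (r2 : Reduces m2 t2 t2') :
    Reduces (m1 + m2) (join h1 h2 t1 t2) (join h1 h2 t1' t2') := by
  have left : Reduces m1 (join h1 h2 t1 t2) (join h1 h2 t1' t2) :=
    r1.map (join h1 h2 · t2) (leftCol h1 h2) fun j b s =>
      (reduce_leftCol_join h1 h2 s t2 j b).symm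
  have right : Reduces m2 (join h1 h2 t1' t2) (join h1 h2 t1' t2') :=
    r2.map (join h1 h2 t1' ·) (rightCol h1 h2) fun j b s =>
      (reduce_rightCol_join h1 h2 t1' s j b).symm
  exact left.trans right

theorem exists_of_reduces_join {m : ℕ} {t : Multiset (Fin (c1 + c2 - L) → ZMod 2)}
    (h : Reduces m (join h1 h2 t1 t2) t) :
    ∃ (m1 m2 : ℕ) (t1' : Multiset (Fin c1 → ZMod 2)) (t2' : Multiset (Fin c2 → ZMod 2)),
      m1 + m2 = m ∧ Reduces m1 t1 t1' ∧ Reduces m2 t2 t2' ∧ t = join h1 h2 t1' t2' := by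
  generalize hs : join h1 h2 t1 t2 = s at h
  induction h with
  | refl => exact ⟨0, 0, t1, t2, rfl, .refl _, .refl _, hs.symm⟩
  | step k b _ ih =>
    obtain ⟨m1, m2, t1', t2', rfl, r1, r2, rfl⟩ := ih hs
    rcases leftCol_or_rightCol h1 h2 k with ⟨j, rfl⟩ | ⟨j, rfl⟩
    · exact ⟨m1 + 1, m2, _, t2', by omega, .step j b r1, r2, reduce_leftCol_join ..⟩
    · exact ⟨m1, m2 + 1, t1', _, rfl, r1, .step j b r2, reduce_rightCol_join ..⟩

end Join

/-- attacks on a joined table decompose into attacks on the components. -/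
theorem reduces_join_iff {c1 c2 L : ℕ} (h1 : L ≤ c1) (h2 : L ≤ c2) (m : ℕ)
    (t1 : Multiset (Fin c1 → ZMod 2)) (t2 : Multiset (Fin c2 → ZMod 2))
    (t : Multiset (Fin (c1 + c2 - L) → ZMod 2)) :
    Reduces m (join h1 h2 t1 t2) t ↔
      ∃ (m1 m2 : ℕ) (t1' : Multiset (Fin c1 → ZMod 2)) (t2' : Multiset (Fin c2 → ZMod 2)),
        m1 + m2 = m ∧ Reduces m1 t1 t1' ∧ Reduces m2 t2 t2' ∧ t = join h1 h2 t1' t2' := by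
  refine ⟨exists_of_reduces_join, ?_⟩
  rintro ⟨m1, m2, t1', t2', rfl, r1, r2, rfl⟩
  exact reduces_join r1 r2
end

section
/- Let m1, m2 ≥ 0 with n = m1 + m2. Let t1 and t2 be tables each with exactly n+1 columns such that t1 is (1, m1, n+1)-safe and t2 is (1, m2, n+1)-safe. Then the join t1 ⋈ t2 (matching all n+1 columns, i.e., the multiset in which each vector b ∈ {0,1}^{n+1} occurs (multiplicity of b in t1)·(multiplicity of b in t2) times) is (1, 0, n+1)-safe: the number of its rows XOR-summing to 0 equals the number XOR-summing to 1. -/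
/-!
Expand tables in the Walsh basis: the Walsh coefficient of `t` at a set `S` of columns is
`W_S(t) = ∑_{r ∈ t} (-1)^{∑_{i ∈ S} r i}`, and `t` is `(1,0)`-safe iff `W_univ(t) = 0`.
Splitting a table by the value of a column `j ∉ S` shows that `(1,m)`-safety kills `W_S` for
every `S` missing at most `m` columns. By orthogonality of the Walsh functions,
`∑_S W_S(t₁) W_{Sᶜ}(t₂) = 2^{n+1} W_univ(t₁ ⋈ t₂)`, and since `n = m₁ + m₂` either `Sᶜ` has
at most `m₁` elements or `S` has at most `m₂`, so every term on the left vanishes.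
-/

open Finset

def bitSign : AddChar (ZMod 2) ℤ where
  toFun x := if x = 0 then 1 else -1
  map_zero_eq_one' := rfl
  map_add_eq_mul' := by decide

@[simp] lemma bitSign_one : bitSign 1 = -1 := rfl

lemma zmodTwo_eq_zero_or_eq_one (x : ZMod 2) : x = 0 ∨ x = 1 := by
  revert x; decide

lemma bitSign_add_bitSign_of_ne {a b : ZMod 2} (h : a ≠ b) : bitSign a + bitSign b = 0 := by
  revert a b; decide

lemma bitSign_mul_self (a : ZMod 2) : bitSign a * bitSign a = 1 := by
  revert a; decide

lemma bitSign_sum {ι : Type*} (s : Finset ι) (f : ι → ZMod 2) :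
    bitSign (∑ i ∈ s, f i) = ∏ i ∈ s, bitSign (f i) := by
  induction s using Finset.cons_induction with
  | empty => simp
  | cons a s ha ih => rw [sum_cons, prod_cons, AddChar.map_add_eq_mul, ih]

section Walsh

variable {N : ℕ}

def walsh (S : Finset (Fin N)) (v : Fin N → ZMod 2) : ℤ := bitSign (∑ i ∈ S, v i)

def walshCoeff (S : Finset (Fin N)) (t : Multiset (Fin N → ZMod 2)) : ℤ :=
  (t.map (walsh S)).sum

lemma walsh_eq_prod (S : Finset (Fin N)) (v : Fin N → ZMod 2) :
    walsh S v = ∏ i ∈ S, bitSign (v i) :=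
  bitSign_sum S v

lemma walsh_insert {S : Finset (Fin N)} {j : Fin N} (hj : j ∉ S) (v : Fin N → ZMod 2) :
    walsh (insert j S) v = bitSign (v j) * walsh S v := by
  rw [walsh_eq_prod, walsh_eq_prod, prod_insert hj]

lemma walshCoeff_add (S : Finset (Fin N)) (s t : Multiset (Fin N → ZMod 2)) :
    walshCoeff S (s + t) = walshCoeff S s + walshCoeff S t := by
  simp [walshCoeff]

lemma reduce_zero_add_reduce_one (j : Fin N) (t : Multiset (Fin N → ZMod 2)) :
    reduce j 0 t + reduce j 1 t = t := by
  have : reduce j 1 t = t.filter fun r => ¬ r j = 0 :=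
    Multiset.filter_congr fun r _ => by
      rcases zmodTwo_eq_zero_or_eq_one (r j) with h | h <;> simp [h]
  rw [reduce, this, Multiset.filter_add_not]

lemma walshCoeff_eq_add_reduce (S : Finset (Fin N)) (j : Fin N) (t : Multiset (Fin N → ZMod 2)) :
    walshCoeff S t = walshCoeff S (reduce j 0 t) + walshCoeff S (reduce j 1 t) := by
  rw [← walshCoeff_add, reduce_zero_add_reduce_one]

lemma walshCoeff_reduce {S : Finset (Fin N)} {j : Fin N} (hj : j ∉ S) (b : ZMod 2)
    (t : Multiset (Fin N → ZMod 2)) :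
    walshCoeff S (reduce j b t) = bitSign b * walshCoeff (insert j S) (reduce j b t) := by
  have : (reduce j b t).map (walsh (insert j S)) =
      (reduce j b t).map fun r => bitSign b * walsh S r :=
    Multiset.map_congr rfl fun r hr => by rw [walsh_insert hj, (Multiset.mem_filter.mp hr).2]
  rw [walshCoeff, walshCoeff, this, Multiset.sum_map_mul_left, ← mul_assoc, bitSign_mul_self,
    one_mul]

lemma walshCoeff_univ (t : Multiset (Fin N → ZMod 2)) :
    walshCoeff univ t =
      ((t.filter fun r => xorSum r = 0).card : ℤ) - (t.filter fun r => xorSum r = 1).card := by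
  induction t using Multiset.induction_on with
  | empty => simp [walshCoeff]
  | cons a s ih =>
    have : walshCoeff univ (a ::ₘ s) = walsh univ a + walshCoeff univ s := by simp [walshCoeff]
    rw [this, ih, Multiset.filter_cons, Multiset.filter_cons, walsh]
    change bitSign (xorSum a) + _ = _
    rcases zmodTwo_eq_zero_or_eq_one (xorSum a) with h | h <;> simp [h] <;> ring

lemma safeB_zero_iff (t : Multiset (Fin N → ZMod 2)) : safeB 0 t ↔ walshCoeff univ t = 0 := by
  rw [walshCoeff_univ, sub_eq_zero, Nat.cast_inj]
  rfl

lemma safeB_of_succ [NeZero N] {m : ℕ} {t : Multiset (Fin N → ZMod 2)} (h : safeB (m + 1) t) :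
    safeB m t := by
  induction m generalizing t with
  | zero =>
    rw [safeB_zero_iff, walshCoeff_eq_add_reduce univ 0, (safeB_zero_iff _).1 (h 0 0),
      (safeB_zero_iff _).1 (h 0 1), add_zero]
  | succ m ih => exact fun j c => ih (h j c)

lemma walshCoeff_eq_zero_of_safeB [NeZero N] {m : ℕ} {t : Multiset (Fin N → ZMod 2)}
    (h : safeB m t) {S : Finset (Fin N)} (hS : Sᶜ.card ≤ m) : walshCoeff S t = 0 := by
  induction m generalizing t S with
  | zero =>
    obtain rfl : S = univ := by simpa using hS
    exact (safeB_zero_iff t).1 h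
  | succ m ih =>
    obtain hS' | hS' := Nat.lt_or_eq_of_le hS
    · exact ih (safeB_of_succ h) (Nat.lt_succ_iff.mp hS')
    obtain ⟨j, hj⟩ : Sᶜ.Nonempty := card_pos.mp (by omega)
    have hjS : j ∉ S := mem_compl.mp hj
    have hins : (insert j S)ᶜ.card ≤ m := by
      rw [compl_insert, card_erase_of_mem hj, hS', Nat.add_sub_cancel]
    rw [walshCoeff_eq_add_reduce S j, walshCoeff_reduce hjS, walshCoeff_reduce hjS,
      ih (h j 0) hins, ih (h j 1) hins, mul_zero, mul_zero, add_zero]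

lemma walshCoeff_eq_sum_count (S : Finset (Fin N)) (t : Multiset (Fin N → ZMod 2)) :
    walshCoeff S t = ∑ v, (t.count v : ℤ) * walsh S v := by
  rw [walshCoeff, sum_multiset_map_count, sum_subset (subset_univ t.toFinset)]
  · simp
  · intro v _ hv
    rw [Multiset.count_eq_zero_of_notMem (by simpa using hv)]
    simp

lemma count_fullJoin (t₁ t₂ : Multiset (Fin N → ZMod 2)) (v : Fin N → ZMod 2) :
    (fullJoin t₁ t₂).count v = t₁.count v * t₂.count v := by
  rw [fullJoin, Multiset.count_sum', sum_eq_single v]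
  · simp
  · intro u _ hu
    rw [Multiset.count_replicate, if_neg hu]
  · simp

lemma sum_walsh_mul_walsh_compl (v w : Fin N → ZMod 2) :
    ∑ S, walsh S v * walsh Sᶜ w = if v = w then 2 ^ N * walsh univ v else 0 := by
  have expand : ∑ S, walsh S v * walsh Sᶜ w = ∏ i, (bitSign (v i) + bitSign (w i)) := by
    rw [prod_add, powerset_univ]
    refine sum_congr rfl fun S _ => ?_
    rw [walsh_eq_prod, walsh_eq_prod, compl_eq_univ_sdiff]
  rw [expand]
  split_ifs with hvw
  · subst hvw
    simp_rw [← two_mul, prod_mul_distrib, walsh_eq_prod, prod_const, card_univ, Fintype.card_fin]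
  · obtain ⟨i, hi⟩ := Function.ne_iff.mp hvw
    exact prod_eq_zero (mem_univ i) (bitSign_add_bitSign_of_ne hi)

lemma sum_walshCoeff_mul_walshCoeff_compl (t₁ t₂ : Multiset (Fin N → ZMod 2)) :
    ∑ S, walshCoeff S t₁ * walshCoeff Sᶜ t₂ = 2 ^ N * walshCoeff univ (fullJoin t₁ t₂) := by
  calc ∑ S, walshCoeff S t₁ * walshCoeff Sᶜ t₂
      = ∑ v, ∑ w, (t₁.count v : ℤ) * t₂.count w * ∑ S, walsh S v * walsh Sᶜ w := by
        simp_rw [walshCoeff_eq_sum_count, sum_mul_sum, mul_sum]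
        rw [sum_comm]
        refine sum_congr rfl fun v _ => ?_
        rw [sum_comm]
        refine sum_congr rfl fun w _ => sum_congr rfl fun S _ => by ring
    _ = ∑ v, (t₁.count v : ℤ) * t₂.count v * (2 ^ N * walsh univ v) := by
        simp_rw [sum_walsh_mul_walsh_compl, mul_ite, mul_zero, sum_ite_eq]
        simp
    _ = 2 ^ N * walshCoeff univ (fullJoin t₁ t₂) := by
        rw [walshCoeff_eq_sum_count, mul_sum]
        refine sum_congr rfl fun v _ => ?_
        rw [count_fullJoin]
        push_cast
        ring

end Walsh

/-- joining a (1,m1,n+1)-safe table with a (1,m2,n+1)-safe table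
(with n = m1 + m2) on all n+1 columns yields a (1,0,n+1)-safe table. -/
theorem fullJoin_safe (n m1 m2 : ℕ) (hn : n = m1 + m2)
    (t1 t2 : Multiset (Fin (n + 1) → ZMod 2))
    (h1 : safeB m1 t1) (h2 : safeB m2 t2) :
    safeB 0 (fullJoin t1 t2) := by
  have hterms : ∀ S : Finset (Fin (n + 1)), walshCoeff S t1 * walshCoeff Sᶜ t2 = 0 := by
    intro S
    have hcard : S.card + Sᶜ.card = n + 1 := by
      rw [card_add_card_compl, Fintype.card_fin]
    by_cases hS : Sᶜ.card ≤ m1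
    · rw [walshCoeff_eq_zero_of_safeB h1 hS, zero_mul]
    · rw [walshCoeff_eq_zero_of_safeB h2 (S := Sᶜ) (by rw [compl_compl]; omega), mul_zero]
  have hsum := sum_walshCoeff_mul_walshCoeff_compl t1 t2
  rw [sum_eq_zero fun S _ => hterms S, eq_comm, mul_eq_zero] at hsum
  exact (safeB_zero_iff _).2 (hsum.resolve_left (by positivity))
end

section
/- Tightness of sequential composition (counterexample): let n ≥ 1 and let t be the (n+1)-column table containing each vector of {0,1}^{n+1} exactly once (the identity-gadget table, which is (1,n,n+1)-safe). Then the join t ⋈ t matching all n+1 columns (i.e., the 'diagonal' table containing each v ∈ {0,1}^{n+1} exactly once, viewed with both component copies identified) is NOT safe against n+1 observations split as m on the first copy and n+1−m on the second copy with complementary column index sets: formally, there exists a sequence of n+1 reductions applied to t ⋈ t (equivalently to t, since the join on all columns of t with itself equals t) such that the resulting table fails (1,0,n+1)-safety. Concretely, reducing t at all n+1 columns to bits b_1,…,b_{n+1} leaves the single row (b_1,…,b_{n+1}), whose counts of XOR-sum-0 and XOR-sum-1 rows differ; hence t is (1,n,n+1)-safe but not (1,n+1,n+1)-safe. -/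
/-!
Reducing a table at `m` columns amounts to filtering it by a list of `m` prescribed
`(column, bit)` pairs. When `m < n + 1`, some column `j` is left free, and adding the unit
vector `eⱼ` is an involution of the filtered cube that flips the XOR-sum, so the two counts
agree. When all `n + 1` columns are prescribed to a row `a`, only copies of `a` survive, and
they all have the same XOR-sum; so a `(1, N, N)`-safe table with `N` columns is empty.
-/

section Reductions

variable {N : ℕ}

lemma safeB_iff_forall_list {m : ℕ} {t : Multiset (Fin N → ZMod 2)} :
    safeB m t ↔ ∀ l : List (Fin N × ZMod 2), l.length = m →
      safeB 0 (t.filter fun r => ∀ p ∈ l, r p.1 = p.2) := by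
  induction m generalizing t with
  | zero => simp [List.length_eq_zero_iff]
  | succ m ih =>
    simp only [safeB, ih, reduce, Multiset.filter_filter]
    constructor
    · rintro h (_ | ⟨⟨j, c⟩, l⟩) hl
      · simp at hl
      · convert h j c l (by simpa using hl) using 3 <;> simp [and_comm]
    · intro h j c l hl
      convert h ((j, c) :: l) (by simp [hl]) using 3 <;> simp [and_comm]

lemma xorSum_add_single (r : Fin N → ZMod 2) (j : Fin N) :
    xorSum (r + Pi.single j 1) = xorSum r + 1 := by
  simp [xorSum, Finset.sum_add_distrib]

lemma safeB_zero_of_add_single_mem {s : Finset (Fin N → ZMod 2)} (j : Fin N)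
    (hs : ∀ r ∈ s, r + Pi.single j 1 ∈ s) : safeB 0 s.val := by
  have flip_flip (r : Fin N → ZMod 2) : r + Pi.single j 1 + Pi.single j 1 = r := by
    rw [add_assoc, ← Pi.single_add, CharTwo.add_self_eq_zero, Pi.single_zero, add_zero]
  change (s.val.filter _).card = (s.val.filter _).card
  rw [← Finset.filter_val, ← Finset.filter_val, ← Finset.card_def, ← Finset.card_def]
  refine Finset.card_nbij' (· + Pi.single j 1) (· + Pi.single j 1) ?_ ?_
    (fun r _ => flip_flip r) (fun r _ => flip_flip r) <;>
  · intro r hr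
    simp only [Finset.coe_filter, Set.mem_ofPred_eq] at hr ⊢
    exact ⟨hs r hr.1, by rw [xorSum_add_single, hr.2]; decide⟩

lemma exists_col_notMem_of_length_lt {l : List (Fin N × ZMod 2)} (hl : l.length < N) :
    ∃ j, ∀ p ∈ l, p.1 ≠ j := by
  have hcard : (l.map Prod.fst).toFinset.card < (Finset.univ : Finset (Fin N)).card := by
    calc (l.map Prod.fst).toFinset.card ≤ (l.map Prod.fst).length := List.toFinset_card_le _
      _ < _ := by simpa using hl
  obtain ⟨j, -, hj⟩ := Finset.exists_mem_notMem_of_card_lt_card hcard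
  exact ⟨j, fun p hp hpj => hj (List.mem_toFinset.2 (List.mem_map.2 ⟨p, hp, hpj⟩))⟩

theorem safeB_univ_of_lt {m : ℕ} (hm : m < N) :
    safeB m (Finset.univ : Finset (Fin N → ZMod 2)).val := by
  refine safeB_iff_forall_list.2 fun l hl => ?_
  obtain ⟨j, hj⟩ := exists_col_notMem_of_length_lt (hl ▸ hm)
  rw [← Finset.filter_val]
  refine safeB_zero_of_add_single_mem j fun r hr => ?_
  simp only [Finset.mem_filter, Finset.mem_univ, true_and] at hr ⊢
  intro p hp
  simp [hj p hp, hr p hp]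

lemma card_filter_xorSum_eq_of_forall_eq {u : Multiset (Fin N → ZMod 2)} {a : Fin N → ZMod 2}
    (hu : ∀ r ∈ u, r = a) (x : ZMod 2) :
    (u.filter fun r => xorSum r = x).card = if xorSum a = x then u.card else 0 := by
  split_ifs with ha
  · exact congrArg _ (Multiset.filter_eq_self.2 fun r hr => hu r hr ▸ ha)
  · exact Multiset.card_eq_zero.2 (Multiset.filter_eq_nil.2 fun r hr => hu r hr ▸ ha)

theorem eq_zero_of_safeB_self {t : Multiset (Fin N → ZMod 2)} (h : safeB N t) : t = 0 := by
  refine Multiset.eq_zero_of_forall_notMem fun a ha => ?_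
  have hsafe := safeB_iff_forall_list.1 h ((List.finRange N).map fun i => (i, a i)) (by simp)
  have hfilter : (t.filter fun r => ∀ p ∈ (List.finRange N).map fun i => (i, a i), r p.1 = p.2)
      = t.filter (· = a) :=
    Multiset.filter_congr fun r _ => by simp [funext_iff]
  have hu : ∀ r ∈ t.filter (· = a), r = a := fun r hr => (Multiset.mem_filter.1 hr).2
  have hpos : 0 < (t.filter (· = a)).card :=
    Multiset.card_pos_iff_exists_mem.2 ⟨a, by simpa using ha⟩
  rw [hfilter] at hsafe
  simp only [safeB, card_filter_xorSum_eq_of_forall_eq hu] at hsafe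
  obtain h0 | h1 : xorSum a = 0 ∨ xorSum a = 1 := by
    generalize xorSum a = x; revert x; decide
  · rw [if_pos h0, if_neg (by rw [h0]; decide)] at hsafe
    omega
  · rw [if_neg (by rw [h1]; decide), if_pos h1] at hsafe
    omega

end Reductions

theorem identity_gadget_tight_general (n : ℕ) :
    safeB n ((Finset.univ : Finset (Fin (n + 1) → ZMod 2)).val) ∧
      ¬ safeB (n + 1) ((Finset.univ : Finset (Fin (n + 1) → ZMod 2)).val) :=
  ⟨safeB_univ_of_lt n.lt_succ_self, fun h =>
    Finset.univ_nonempty.ne_empty (Finset.val_eq_zero.1 (eq_zero_of_safeB_self h))⟩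

/-- tightness. The full-support uniform table (each vector of
{0,1}^(n+1) exactly once) is (1,n,n+1)-safe but not (1,n+1,n+1)-safe. -/
theorem identity_gadget_tight (n : ℕ) (hn : 1 ≤ n) :
    safeB n ((Finset.univ : Finset (Fin (n + 1) → ZMod 2)).val) ∧
      ¬ safeB (n + 1) ((Finset.univ : Finset (Fin (n + 1) → ZMod 2)).val) :=
  identity_gadget_tight_general n
end

section
/- Safety of restrictions to pairs of secrets mapping to distinct outputs: let t1 be (x,n+1)-deterministic with output function f: {0,1}^x → {0,1}, and (x, m1, n+1)-safe. Let b, b' ∈ {0,1}^x with f(b) ≠ f(b'), and let t1' be the table of output blocks (last n+1 columns) of rows in the b- and b'-restrictions of t1, combined as a single multiset. Then t1', regarded as an (n+1)-column table whose single 'secret' is the XOR-sum of a row, is (1, m1, n+1)-safe. -/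
/-! Determinism makes every output block of the `b`-restriction XOR-sum to `f b` and every
output block of the `b'`-restriction XOR-sum to `f b' ≠ f b`, so the secret of a row of the
combined table says which restriction it came from, and safety makes the two restrictions
equinumerous. Reducing the combined table on an output column is the same as reducing `t1` on
the corresponding column before restricting and projecting, which carries the argument
through an induction on the number of reductions. -/

def lastCol {N m : ℕ} (h : m ≤ N) (j : Fin m) : Fin N :=
  ⟨N - m + j.1, by have := j.2; omega⟩

lemma reduce_add {N : ℕ} (j : Fin N) (c : ZMod 2) (s s' : Multiset (Fin N → ZMod 2)) :
    reduce j c (s + s') = reduce j c s + reduce j c s' :=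
  Multiset.filter_add _ s s'

lemma reduce_map_lastProj {N m : ℕ} (h : m ≤ N) (j : Fin m) (c : ZMod 2)
    (t : Multiset (Fin N → ZMod 2)) :
    reduce j c (t.map (lastProj h)) = (reduce (lastCol h j) c t).map (lastProj h) :=
  Multiset.filter_map _ _ t

lemma restrict_reduce {N x ℓ : ℕ} (hN : x * ℓ ≤ N) (b : Fin x → ZMod 2) (j : Fin N)
    (c : ZMod 2) (t : Multiset (Fin N → ZMod 2)) :
    restrict hN b (reduce j c t) = reduce j c (restrict hN b t) :=
  Multiset.filter_comm _ _ t

lemma card_filter_of_forall_eq {α β : Type*} [DecidableEq β] {g : α → β} {s : Multiset α}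
    {c : β} (hs : ∀ a ∈ s, g a = c) (d : β) :
    (s.filter (fun a => g a = d)).card = if c = d then s.card else 0 := by
  split_ifs with hcd
  · rw [Multiset.filter_eq_self.2 fun a ha => (hs a ha).trans hcd]
  · rw [Multiset.filter_eq_nil.2 fun a ha had => hcd ((hs a ha).symm.trans had),
      Multiset.card_zero]

lemma safeB_zero_add {N : ℕ} {s s' : Multiset (Fin N → ZMod 2)} {c c' : ZMod 2}
    (hs : ∀ r ∈ s, xorSum r = c) (hs' : ∀ r ∈ s', xorSum r = c') (hne : c ≠ c')
    (hcard : s.card = s'.card) : safeB 0 (s + s') := by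
  show (Multiset.filter _ (s + s')).card = (Multiset.filter _ (s + s')).card
  simp only [Multiset.filter_add, Multiset.card_add, card_filter_of_forall_eq hs,
    card_filter_of_forall_eq hs']
  rw [hcard]
  clear hs hs'
  obtain ⟨rfl, rfl⟩ | ⟨rfl, rfl⟩ : c = 0 ∧ c' = 1 ∨ c = 1 ∧ c' = 0 := by
    revert c c'; decide
  all_goals simp [show (1 : ZMod 2) ≠ 0 by decide]

lemma lastSum_of_mem_restrict {x ℓ m N : ℕ} {hN : x * ℓ ≤ N} {hout : m ≤ N}
    {f : (Fin x → ZMod 2) → ZMod 2} {t : Multiset (Fin N → ZMod 2)}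
    (hdet : ∀ r ∈ t, lastSum hout r = f (fun i => blockSum hN i r))
    {b : Fin x → ZMod 2} {r : Fin N → ZMod 2} (hr : r ∈ restrict hN b t) :
    lastSum hout r = f b := by
  rw [restrict, Multiset.mem_filter] at hr
  rw [hdet r hr.1, funext hr.2]

/-- for a deterministic, (x,m1,n+1)-safe table t1 and two secrets
b, b' mapping to distinct outputs, the combined multiset of output blocks of the
b- and b'-restrictions is (1,m1,n+1)-safe (secret = XOR-sum of a row). -/
theorem restriction_pair_safe
    {x n m1 N1 : ℕ} (hN1 : x * (n + 1) ≤ N1) (hout : n + 1 ≤ N1)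
    (t1 : Multiset (Fin N1 → ZMod 2))
    (f : (Fin x → ZMod 2) → ZMod 2)
    (hdet : ∀ r ∈ t1, lastSum hout r = f (fun i => blockSum hN1 i r))
    (hsafe : safe hN1 m1 t1)
    (b b' : Fin x → ZMod 2) (hneq : f b ≠ f b') :
    safeB m1 ((restrict hN1 b t1 + restrict hN1 b' t1).map (lastProj hout)) := by
  induction m1 generalizing t1 with
  | zero =>
    have hsecret : ∀ {b₀}, ∀ r ∈ (restrict hN1 b₀ t1).map (lastProj hout), xorSum r = f b₀ := by
      intro b₀ r hr
      obtain ⟨r₁, hr₁, rfl⟩ := Multiset.mem_map.1 hr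
      exact lastSum_of_mem_restrict hdet hr₁
    rw [Multiset.map_add]
    exact safeB_zero_add hsecret hsecret hneq (by simpa using hsafe b b')
  | succ m ih =>
    intro j c
    rw [reduce_map_lastProj, reduce_add, ← restrict_reduce, ← restrict_reduce]
    exact ih _ (fun r hr => hdet r (Multiset.mem_of_mem_filter hr)) (hsafe _ c)
end

section
/- Deleting an unfixed column after reduction preserves the safety hierarchy: let t be an (n+1)-column table that is (1, m, n+1)-safe with m ≥ 1, let j be a column and b a bit, and let t' be the reduction of t by (j,b) followed by deletion of column j. Then t' is an n-column table that is (1, m−1, n)-safe. -/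
/-!
Every row of `reduce j b t` has bit `b` at column `j`, so deleting that column shifts every
XOR-sum by the same bit `b`; this at most swaps the two counts compared by `safeB 0`. Reducing
the table with column `j` deleted at column `i` is the same as reducing the original table at
column `j.succAbove i` and then deleting, so the base case propagates through all depths.
-/

lemma xorSum_deleteCol {n : ℕ} (j : Fin (n + 1)) (r : Fin (n + 1) → ZMod 2) :
    xorSum (deleteCol j r) = xorSum r + r j := by
  rw [xorSum, xorSum, Fin.sum_univ_succAbove r j, add_comm (r j), add_assoc,
    CharTwo.add_self_eq_zero, add_zero]
  rfl

lemma reduce_map_deleteCol {n : ℕ} (j : Fin (n + 1)) (i : Fin n) (c : ZMod 2)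
    (s : Multiset (Fin (n + 1) → ZMod 2)) :
    reduce i c (s.map (deleteCol j)) = (reduce (j.succAbove i) c s).map (deleteCol j) := by
  rw [reduce, Multiset.filter_map]
  rfl

lemma safeB_zero_map_of_xorSum_eq_add {N M : ℕ} {f : (Fin N → ZMod 2) → Fin M → ZMod 2}
    {s : Multiset (Fin N → ZMod 2)} (b : ZMod 2) (hf : ∀ r ∈ s, xorSum (f r) = xorSum r + b)
    (hs : safeB 0 s) : safeB 0 (s.map f) := by
  have count_shift : ∀ c : ZMod 2, ((s.map f).filter (xorSum · = c)).card
      = (s.filter (xorSum · = c + b)).card := by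
    intro c
    rw [Multiset.filter_map, Multiset.card_map]
    congr 1
    refine Multiset.filter_congr fun r hr => ?_
    rw [Function.comp_apply, hf r hr, ← CharTwo.sub_eq_add, sub_eq_iff_eq_add]
  simp only [safeB] at hs ⊢
  rw [count_shift, count_shift]
  fin_cases b
  · exact hs
  · exact hs.symm

lemma safeB_map_deleteCol {n : ℕ} (j : Fin (n + 1)) (b : ZMod 2) (k : ℕ)
    (s : Multiset (Fin (n + 1) → ZMod 2)) (hb : ∀ r ∈ s, r j = b) (hs : safeB k s) :
    safeB k (s.map (deleteCol j)) := by
  induction k generalizing s with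
  | zero =>
    refine safeB_zero_map_of_xorSum_eq_add b (fun r hr => ?_) hs
    rw [xorSum_deleteCol, hb r hr]
  | succ k ih =>
    intro i c
    rw [reduce_map_deleteCol]
    exact ih _ (fun r hr => hb r (Multiset.mem_of_mem_filter hr)) (hs (j.succAbove i) c)

/-- reducing a (1,m,n+1)-safe table at column j (to bit b) and
then deleting column j yields a (1,m-1,n)-safe n-column table. -/
theorem reduce_delete_safe (n m : ℕ) (hm : 1 ≤ m)
    (t : Multiset (Fin (n + 1) → ZMod 2)) (h : safeB m t)
    (j : Fin (n + 1)) (b : ZMod 2) :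
    safeB (m - 1) ((reduce j b t).map (deleteCol j)) := by
  obtain ⟨k, rfl⟩ : ∃ k, m = k + 1 := ⟨m - 1, by omega⟩
  exact safeB_map_deleteCol j b k _ (fun r hr => (Multiset.mem_filter.1 hr).2) (h j b)
end
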